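/- Consider the adaptive exponentially weighted forecaster with abstention, whose learning rates are η_1 = 1 and, with d_0 = 1 and d_t = d_{t−1} + 1[1 − 2c_t ≤ η_t], η_{t+1} = min(√(log N / d_t), 1). Then for every η ∈ (0, 1] satisfying (log N)/η ≥ (η/8)·∑_{t=1}^T 1[1 − 2c_t ≤ η], its regret satisfies R_T = ∑_{t=1}^T E[ℓ̂_t] − min_{i∈[N]} ∑_{t=1}^T ℓ_{t,i} ≤ (15/4)·(log N)/η + (5/4)·√(log N). -/

import Mathlib

noncomputable section

/-- Binary loss of expert `i` in round `t`: `1[y_{t,i} ≠ y_t]`. -/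
def expertLoss {N : ℕ} (adv : ℕ → Fin N → ℝ) (y : ℕ → ℝ) (t : ℕ) (i : Fin N) : ℝ :=
  if adv t i = y t then 0 else 1

/-- The counter `d_t` of the adaptive algorithm (0-indexed rounds): `d` starts at `1`
and is incremented in round `s` whenever `1 - 2 c_s ≤ η_s`, where `η_0 = 1` and
`η_s = min(√(log N / d_s), 1)` for `s ≥ 1` (here `d_s` is the counter before round `s`). -/
def adaD (N : ℕ) (c : ℕ → ℝ) : ℕ → ℕ
  | 0 => 1
  | s + 1 =>
      adaD N c s +
        (if 1 - 2 * c s ≤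
            (if s = 0 then (1 : ℝ) else min (Real.sqrt (Real.log N / adaD N c s)) 1)
          then 1 else 0)

/-- The adaptive learning rate used in round `s` (0-indexed): `η_0 = 1` and
`η_s = min(√(log N / d_s), 1)` for `s ≥ 1`. -/
def adaEta (N : ℕ) (c : ℕ → ℝ) (s : ℕ) : ℝ :=
  if s = 0 then 1 else min (Real.sqrt (Real.log N / adaD N c s)) 1

/-- Normalized exponential weight `q_{t,i}` of expert `i` in round `t`, computed with
the adaptive learning rate `η_t`. -/
def adaQ {N : ℕ} (c : ℕ → ℝ) (adv : ℕ → Fin N → ℝ) (y : ℕ → ℝ) (t : ℕ) (i : Fin N) : ℝ :=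
  Real.exp (-(adaEta N c t) * ∑ k ∈ Finset.range t, expertLoss adv y k i) /
    ∑ j, Real.exp (-(adaEta N c t) * ∑ k ∈ Finset.range t, expertLoss adv y k j)

/-- Aggregated prediction `p_t` of the adaptive algorithm. -/
def adaP {N : ℕ} (c : ℕ → ℝ) (adv : ℕ → Fin N → ℝ) (y : ℕ → ℝ) (t : ℕ) : ℝ :=
  ∑ i, adaQ c adv y t i * adv t i

/-- Expected per-round loss of the adaptive exponentially weighted forecaster with
abstention: `α_t c_t + (1 - α_t)·1[k_t^* ≠ y_t]` with `p* = max(p_t, 1 - p_t)`,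
`k_t^* = 1[p_t ≥ 1/2]`, `α_t = 2(1 - p*)`. -/
def adaAlgLoss {N : ℕ} (c : ℕ → ℝ) (adv : ℕ → Fin N → ℝ) (y : ℕ → ℝ) (t : ℕ) : ℝ :=
  let p := adaP c adv y t
  let pstar := max p (1 - p)
  let kstar : ℝ := if (1 : ℝ) / 2 ≤ p then 1 else 0
  let α := 2 * (1 - pstar)
  α * c t + (1 - α) * (if kstar = y t then 0 else 1)

end

/-!
The mix loss `Φ_η(L) = -(1/η) log((1/N) ∑_j exp(-η L_j))` is antitone in `η`, so along the
decreasing rates `η_t` the increments `Φ_{η_t}(L_{t+1}) - Φ_{η_t}(L_t)` telescope to at most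
`Φ_{η_T}(L_T) ≤ min_i L_{T,i} + (log N)/η_T`. If `s` is the weight of the erring experts, the
increment is `-log(1 - s + s e^{-η_t})/η_t`; it dominates the abstention loss outright when
`1 - 2c_t > η_t`, and up to Hoeffding's `η_t/8` in the counted rounds. The counted rounds run
through successive values `d` of the counter and `√(log N / d) ≤ 2√(log N) (√d - √(d - 1))`,
so their `η_t/8` add up to at most `√(log N · d_T)/4`. A counted round with `1 - 2c_t > η`
forces `η < η_t`, i.e. `d_t ≤ log N / η²`, so the hypothesis on `η` gives
`d_T ≤ 9 log N / η² + 2`; then `√(log N · d_T)` and `log N / η_T` are both at most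
`√(log N) + 3 log N / η`.
-/

open Real Finset MeasureTheory ProbabilityTheory

noncomputable def bernoulliMixLoss (η s : ℝ) : ℝ :=
  -log (1 - s + s * exp (-η)) / η

theorem one_sub_add_mul_exp_neg_pos {s : ℝ} (hs0 : 0 ≤ s) (hs1 : s ≤ 1) (η : ℝ) :
    0 < 1 - s + s * exp (-η) := by
  rcases hs1.lt_or_eq with hs1 | rfl
  · have : 0 < 1 - s := by linarith
    positivity
  · simp [exp_pos]

theorem exp_le_one_add_add_sq {x : ℝ} (hx : |x| ≤ 1) : exp x ≤ 1 + x + x ^ 2 := by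
  linarith [(abs_le.1 (abs_exp_sub_one_sub_id_le hx)).2]

/-- Hoeffding's lemma for a Bernoulli(`s`) variable. -/
theorem log_one_sub_add_mul_exp_neg_le {s : ℝ} (hs0 : 0 ≤ s) (hs1 : s ≤ 1) (η : ℝ) :
    log (1 - s + s * exp (-η)) ≤ -η * s + η ^ 2 / 8 := by
  set μ : Measure ℝ := Ber((1 : ℝ), 0, ⟨s, hs0, hs1⟩)
  have hsupp : ∀ᵐ z ∂μ, z ∈ Set.Icc (0 : ℝ) 1 := by
    rw [ae_iff]
    exact bernoulliMeasure_apply_of_notMem_of_notMem _ measurableSet_Icc.compl (by simp) (by simp)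
  have hmgf : s * exp (-(η * (1 - s))) + (1 - s) * exp (η * s) ≤ exp (η ^ 2 / 8) := by
    convert (hasSubgaussianMGF_of_mem_Icc aemeasurable_id hsupp).mgf_le (-η) using 1
    · simp [mgf, μ, integral_bernoulliMeasure]
    · norm_num; ring_nf
  have hfactor : 1 - s + s * exp (-η)
      = (s * exp (-(η * (1 - s))) + (1 - s) * exp (η * s)) * exp (-η * s) := by
    simp only [add_mul, mul_assoc, ← exp_add]
    ring_nf
    rw [exp_zero]
    ring
  rw [log_le_iff_le_exp (one_sub_add_mul_exp_neg_pos hs0 hs1 η), hfactor]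
  calc _ ≤ exp (η ^ 2 / 8) * exp (-η * s) := by gcongr
    _ = exp (-η * s + η ^ 2 / 8) := by rw [← exp_add, add_comm]

theorem le_bernoulliMixLoss_add {s η : ℝ} (hs0 : 0 ≤ s) (hs1 : s ≤ 1) (hη : 0 < η) :
    s ≤ bernoulliMixLoss η s + η / 8 := by
  have h := log_one_sub_add_mul_exp_neg_le hs0 hs1 η
  rw [bernoulliMixLoss, ← sub_le_iff_le_add, le_div_iff₀ hη]
  nlinarith

theorem two_mul_mul_le_bernoulliMixLoss {s c η : ℝ} (hs0 : 0 ≤ s) (hs1 : s ≤ 1) (hη0 : 0 < η)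
    (hη1 : η ≤ 1) (hc : η ≤ 1 - 2 * c) :
    2 * c * s ≤ bernoulliMixLoss η s := by
  have hlog := log_le_sub_one_of_pos (one_sub_add_mul_exp_neg_pos hs0 hs1 η)
  have hexp : exp (-η) ≤ 1 - η + η ^ 2 := by
    have := exp_le_one_add_add_sq (x := -η) (by rw [abs_neg, abs_of_pos hη0]; exact hη1)
    linarith [neg_sq η]
  rw [bernoulliMixLoss, le_div_iff₀ hη0]
  nlinarith [mul_le_mul_of_nonneg_left hexp hs0,
    mul_le_mul_of_nonneg_left hc (mul_nonneg hs0 hη0.le)]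

theorem one_sub_two_mul_le_bernoulliMixLoss {s c η : ℝ} (hs1 : s ≤ 1) (hη0 : 0 < η)
    (hη1 : η ≤ 1) (hc : η ≤ 1 - 2 * c) :
    1 - 2 * (1 - s) * (1 - c) ≤ bernoulliMixLoss η s := by
  have hexp : exp η - 1 ≤ η * (2 - 2 * c) := by
    have := exp_le_one_add_add_sq (x := η) (by rw [abs_of_pos hη0]; exact hη1)
    nlinarith
  have hfactor : 1 - s + s * exp (-η) = exp (-η) * (1 + (1 - s) * (exp η - 1)) := by
    rw [mul_add, mul_left_comm, mul_sub, ← exp_add, neg_add_cancel, exp_zero]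
    ring
  have hpos : 0 < 1 + (1 - s) * (exp η - 1) := by
    have : 0 ≤ exp η - 1 := by linarith [add_one_le_exp η]
    nlinarith
  have hlog : log (1 - s + s * exp (-η)) ≤ -η + (1 - s) * (η * (2 - 2 * c)) := by
    rw [hfactor, log_mul (exp_pos _).ne' hpos.ne', log_exp]
    nlinarith [log_le_sub_one_of_pos hpos]
  rw [bernoulliMixLoss, le_div_iff₀ hη0]
  nlinarith

theorem le_bernoulliMixLoss_add_ite {ℓ s c η : ℝ} (hs0 : 0 ≤ s) (hs1 : s ≤ 1) (hc : c ≤ 1 / 2)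
    (hη0 : 0 < η) (hη1 : η ≤ 1) (hℓ : ℓ = 2 * c * s ∨ ℓ = 1 - 2 * (1 - s) * (1 - c)) :
    ℓ ≤ bernoulliMixLoss η s + if 1 - 2 * c ≤ η then η / 8 else 0 := by
  split_ifs with hcη
  · have : ℓ ≤ s := by rcases hℓ with rfl | rfl <;> nlinarith
    linarith [le_bernoulliMixLoss_add hs0 hs1 hη0]
  · rw [add_zero]
    rcases hℓ with rfl | rfl
    · exact two_mul_mul_le_bernoulliMixLoss hs0 hs1 hη0 hη1 (by linarith)
    · exact one_sub_two_mul_le_bernoulliMixLoss hs1 hη0 hη1 (by linarith)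

section MixLoss

variable {ι : Type*} [Fintype ι]

noncomputable def mixLoss (η : ℝ) (L : ι → ℝ) : ℝ :=
  -log ((∑ j, exp (-η * L j)) / Fintype.card ι) / η

noncomputable def gibbs (η : ℝ) (L : ι → ℝ) (i : ι) : ℝ :=
  exp (-η * L i) / ∑ j, exp (-η * L j)

variable [Nonempty ι]

theorem sum_exp_pos (η : ℝ) (L : ι → ℝ) : 0 < ∑ j, exp (-η * L j) :=
  sum_pos (fun _ _ => exp_pos _) univ_nonempty

theorem gibbs_nonneg (η : ℝ) (L : ι → ℝ) (i : ι) : 0 ≤ gibbs η L i :=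
  div_nonneg (exp_pos _).le (sum_exp_pos η L).le

theorem sum_gibbs (η : ℝ) (L : ι → ℝ) : ∑ i, gibbs η L i = 1 := by
  simp only [gibbs]
  rw [← sum_div, div_self (sum_exp_pos η L).ne']

@[simp]
theorem mixLoss_zero (η : ℝ) : mixLoss η (0 : ι → ℝ) = 0 := by
  simp [mixLoss]

theorem mixLoss_le {η : ℝ} (hη : 0 < η) (L : ι → ℝ) (i : ι) :
    mixLoss η L ≤ L i + log (Fintype.card ι) / η := by
  have hcard : (0 : ℝ) < Fintype.card ι := by exact_mod_cast Fintype.card_pos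
  have hi : -η * L i ≤ log (∑ j, exp (-η * L j)) := by
    rw [← log_exp (-η * L i)]
    exact log_le_log (exp_pos _) (single_le_sum (f := fun j => exp (-η * L j))
      (fun j _ => (exp_pos _).le) (mem_univ i))
  rw [mixLoss, log_div (sum_exp_pos η L).ne' hcard.ne', div_le_iff₀ hη, add_mul,
    div_mul_cancel₀ _ hη.ne']
  linarith

theorem antitoneOn_mixLoss (L : ι → ℝ) : AntitoneOn (fun η => mixLoss η L) (Set.Ioi 0) := by
  intro a ha b hb hab
  simp only [Set.mem_Ioi] at ha hb
  set w : ι → ℝ := fun _ => 1 / (Fintype.card ι : ℝ)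
  have hmean (η : ℝ) : ∑ j, w j * exp (-η * L j) = (∑ j, exp (-η * L j)) / Fintype.card ι := by
    rw [sum_div]; exact sum_congr rfl fun j _ => by ring
  have hpow : (∑ j, exp (-a * L j)) / Fintype.card ι
      ≤ ((∑ j, exp (-b * L j)) / Fintype.card ι) ^ (a / b) := by
    have h := arith_mean_le_rpow_mean univ w (fun j => exp (-a * L j)) (fun _ _ => by positivity)
      (by simp [w]) (fun _ _ => (exp_pos _).le) ((one_le_div ha).2 hab)
    simp_rw [← exp_mul, one_div_div] at h
    rw [← hmean, ← hmean]
    convert h using 4 with j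
    field_simp
  have hcard : (0 : ℝ) < Fintype.card ι := by exact_mod_cast Fintype.card_pos
  have hpos (η : ℝ) : 0 < (∑ j, exp (-η * L j)) / Fintype.card ι :=
    div_pos (sum_exp_pos η L) hcard
  have hlog := log_le_log (hpos a) hpow
  rw [log_rpow (hpos b), div_mul_eq_mul_div, le_div_iff₀ hb] at hlog
  simp only [mixLoss]
  rw [div_le_div_iff₀ hb ha]
  linarith

theorem gibbs_mul_sum_exp (η : ℝ) (L : ι → ℝ) (i : ι) :
    gibbs η L i * ∑ j, exp (-η * L j) = exp (-η * L i) :=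
  div_mul_cancel₀ _ (sum_exp_pos η L).ne'

theorem sum_gibbs_mul_mem_Icc (η : ℝ) (L ℓ : ι → ℝ) (hℓ : ∀ j, ℓ j ∈ Set.Icc (0 : ℝ) 1) :
    ∑ j, gibbs η L j * ℓ j ∈ Set.Icc (0 : ℝ) 1 := by
  refine ⟨sum_nonneg fun j _ => mul_nonneg (gibbs_nonneg η L j) (hℓ j).1, ?_⟩
  calc ∑ j, gibbs η L j * ℓ j ≤ ∑ j, gibbs η L j :=
        sum_le_sum fun j _ => mul_le_of_le_one_right (gibbs_nonneg η L j) (hℓ j).2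
    _ = 1 := sum_gibbs η L

theorem mixLoss_add {η : ℝ} (L ℓ : ι → ℝ) (hℓ : ∀ j, ℓ j = 0 ∨ ℓ j = 1) :
    mixLoss η (L + ℓ) = mixLoss η L + bernoulliMixLoss η (∑ j, gibbs η L j * ℓ j) := by
  set s := ∑ j, gibbs η L j * ℓ j
  obtain ⟨hs0, hs1⟩ := sum_gibbs_mul_mem_Icc η L ℓ fun j => by
    rcases hℓ j with h | h <;> simp [h]
  have hterm (j : ι) : exp (-η * (L + ℓ) j) = exp (-η * L j) * (1 - ℓ j + ℓ j * exp (-η)) := by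
    rcases hℓ j with h | h <;> simp [h, mul_add, exp_add]
  have hweighted : ∑ j, exp (-η * L j) * ℓ j = (∑ j, exp (-η * L j)) * s := by
    rw [mul_sum]
    exact sum_congr rfl fun j _ => by rw [← gibbs_mul_sum_exp η L j]; ring
  have hsum : ∑ j, exp (-η * (L + ℓ) j) = (∑ j, exp (-η * L j)) * (1 - s + s * exp (-η)) := by
    simp only [hterm, mul_add, mul_sub, mul_one, ← mul_assoc, sum_add_distrib, sum_sub_distrib,
      ← sum_mul, hweighted]
  have hcard : (0 : ℝ) < Fintype.card ι := by exact_mod_cast Fintype.card_pos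
  rw [mixLoss, mixLoss, bernoulliMixLoss, hsum, mul_div_right_comm,
    log_mul (div_pos (sum_exp_pos η L) hcard).ne' (one_sub_add_mul_exp_neg_pos hs0 hs1 η).ne']
  ring

theorem sum_mixLoss_sub_le {η : ℕ → ℝ} (hη : ∀ t, 0 < η t) (hanti : Antitone η)
    (L : ℕ → ι → ℝ) (hL : L 0 = 0) (T : ℕ) :
    ∑ t ∈ range T, (mixLoss (η t) (L (t + 1)) - mixLoss (η t) (L t)) ≤ mixLoss (η T) (L T) := by
  induction T with
  | zero => simp [hL]
  | succ T ih =>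
    rw [sum_range_succ]
    have := antitoneOn_mixLoss (L (T + 1)) (hη (T + 1)) (hη T) (hanti T.le_succ)
    linarith

end MixLoss

theorem sum_ite_le_sub_of_counter {d : ℕ → ℕ} {P : ℕ → Prop} [DecidablePred P]
    (hd : ∀ t, d (t + 1) = d t + if P t then 1 else 0) {x F : ℕ → ℝ}
    (hx : ∀ t, P t → x t ≤ F (d t + 1) - F (d t)) (T : ℕ) :
    ∑ t ∈ range T, (if P t then x t else 0) ≤ F (d T) - F (d 0) := by
  calc _ ≤ ∑ t ∈ range T, (F (d (t + 1)) - F (d t)) := sum_le_sum fun t _ => by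
        rw [hd t]
        split_ifs with h
        · exact hx t h
        · simp
    _ = F (d T) - F (d 0) := sum_range_sub (F ∘ d) T

theorem inv_sqrt_le_two_mul_sub_sqrt {x : ℝ} (hx : 1 ≤ x) : (√x)⁻¹ ≤ 2 * (√x - √(x - 1)) := by
  have hu : 0 < √x := sqrt_pos.2 (by linarith)
  have hu2 := sq_sqrt (show 0 ≤ x by linarith)
  have hv2 := sq_sqrt (show 0 ≤ x - 1 by linarith)
  rw [inv_le_iff_one_le_mul₀' hu]
  nlinarith [sq_nonneg (√x - √(x - 1))]

theorem one_le_two_mul_sqrt_log {N : ℕ} (hN : 1 < N) : 1 ≤ 2 * √(log N) := by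
  have h2 : (1 / 2 : ℝ) ^ 2 ≤ log N := by
    have : log 2 ≤ log N := log_le_log (by norm_num) (by exact_mod_cast hN)
    linarith [log_two_gt_d9]
  linarith [le_sqrt_of_sq_le h2]

section AdaptiveForecaster

variable {N : ℕ} {c : ℕ → ℝ} {adv : ℕ → Fin N → ℝ} {y : ℕ → ℝ}

noncomputable def cumLoss (adv : ℕ → Fin N → ℝ) (y : ℕ → ℝ) (t : ℕ) (i : Fin N) : ℝ :=
  ∑ k ∈ range t, expertLoss adv y k i

theorem cumLoss_zero : cumLoss adv y 0 = 0 := by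
  ext i; simp [cumLoss]

theorem cumLoss_succ (t : ℕ) : cumLoss adv y (t + 1) = cumLoss adv y t + expertLoss adv y t := by
  ext i; simp [cumLoss, sum_range_succ]

theorem expertLoss_eq_zero_or_one (t : ℕ) (i : Fin N) :
    expertLoss adv y t i = 0 ∨ expertLoss adv y t i = 1 := by
  unfold expertLoss; split_ifs <;> simp

theorem adaQ_eq_gibbs (t : ℕ) : adaQ c adv y t = gibbs (adaEta N c t) (cumLoss adv y t) := rfl

theorem adaD_succ (t : ℕ) :
    adaD N c (t + 1) = adaD N c t + if 1 - 2 * c t ≤ adaEta N c t then 1 else 0 := rfl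

@[simp]
theorem adaD_zero : adaD N c 0 = 1 := rfl

theorem one_le_adaD (t : ℕ) : 1 ≤ adaD N c t := by
  induction t with
  | zero => rfl
  | succ t ih => rw [adaD_succ]; omega

theorem adaD_mono : Monotone (adaD N c) :=
  monotone_nat_of_le_succ fun t => by rw [adaD_succ]; omega

@[simp]
theorem adaEta_zero : adaEta N c 0 = 1 := rfl

theorem adaEta_of_ne_zero {t : ℕ} (ht : t ≠ 0) :
    adaEta N c t = min (√(log N / adaD N c t)) 1 := if_neg ht

theorem adaEta_le_one (t : ℕ) : adaEta N c t ≤ 1 := by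
  rcases eq_or_ne t 0 with rfl | ht
  · simp
  · rw [adaEta_of_ne_zero ht]; exact min_le_right _ _

theorem adaEta_pos (hN : 1 < N) (t : ℕ) : 0 < adaEta N c t := by
  rcases eq_or_ne t 0 with rfl | ht
  · simp
  · have hd : (0 : ℝ) < adaD N c t := by exact_mod_cast one_le_adaD t
    rw [adaEta_of_ne_zero ht]
    exact lt_min (sqrt_pos.2 (div_pos (log_pos (by exact_mod_cast hN)) hd)) one_pos

theorem adaEta_antitone : Antitone (adaEta N c) := by
  refine antitone_nat_of_succ_le fun t => ?_
  rcases eq_or_ne t 0 with rfl | ht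
  · simpa using adaEta_le_one 1
  · rw [adaEta_of_ne_zero ht, adaEta_of_ne_zero t.succ_ne_zero]
    gcongr
    · exact Nat.cast_pos.2 (one_le_adaD t)
    · exact adaD_mono t.le_succ

theorem adaEta_le_sqrt {t : ℕ} (ht : t ≠ 0) : adaEta N c t ≤ √(log N) / √(adaD N c t) := by
  rw [adaEta_of_ne_zero ht, ← sqrt_div (log_natCast_nonneg N)]
  exact min_le_left _ _

theorem adaP_mem_Icc [NeZero N] {t : ℕ} (hadv : ∀ i, adv t i = 0 ∨ adv t i = 1) :
    adaP c adv y t ∈ Set.Icc (0 : ℝ) 1 := by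
  simpa [adaP, adaQ_eq_gibbs] using sum_gibbs_mul_mem_Icc (adaEta N c t) (cumLoss adv y t)
    (adv t) fun i => by rcases hadv i with h | h <;> simp [h]

theorem sum_adaQ_mul_expertLoss [NeZero N] {t : ℕ} (hadv : ∀ i, adv t i = 0 ∨ adv t i = 1)
    (hy : y t = 0 ∨ y t = 1) :
    ∑ i, adaQ c adv y t i * expertLoss adv y t i = |adaP c adv y t - y t| := by
  obtain ⟨hp0, hp1⟩ := adaP_mem_Icc (c := c) (y := y) hadv
  have hloss (i : Fin N) : expertLoss adv y t i = if y t = 0 then adv t i else 1 - adv t i := by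
    rcases hadv i with h | h <;> rcases hy with hy | hy <;> simp [expertLoss, h, hy]
  rcases hy with hy | hy
  · rw [hy, sub_zero, abs_of_nonneg hp0]
    simp only [hloss, hy, if_true, adaP]
  · rw [hy, abs_of_nonpos (sub_nonpos.2 hp1), neg_sub]
    simp only [hloss, hy, one_ne_zero, if_false, mul_sub, mul_one, sum_sub_distrib, adaP]
    rw [adaQ_eq_gibbs, sum_gibbs]

-- The first case is a correct majority vote `k*_t = y_t`, the second a wrong one.
theorem adaAlgLoss_eq_or {t : ℕ} (hp : adaP c adv y t ∈ Set.Icc (0 : ℝ) 1)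
    (hy : y t = 0 ∨ y t = 1) :
    adaAlgLoss c adv y t = 2 * c t * |adaP c adv y t - y t| ∨
      adaAlgLoss c adv y t = 1 - 2 * (1 - |adaP c adv y t - y t|) * (1 - c t) := by
  obtain ⟨hp0, hp1⟩ := hp
  simp only [adaAlgLoss]
  set p := adaP c adv y t
  rcases hy with hy | hy <;> rcases le_or_gt (1 / 2 : ℝ) p with hp | hp
  · right
    rw [max_eq_left (by linarith), if_pos hp, hy]
    simp [abs_of_nonneg hp0]
    ring
  · left
    rw [max_eq_right (by linarith), if_neg hp.not_ge, hy]
    simp [abs_of_nonneg hp0]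
    ring
  · left
    rw [max_eq_left (by linarith), if_pos hp, hy]
    simp [abs_of_nonpos (sub_nonpos.2 hp1)]
    ring
  · right
    rw [max_eq_right (by linarith), if_neg hp.not_ge, hy]
    simp [abs_of_nonpos (sub_nonpos.2 hp1)]
    ring

theorem adaAlgLoss_le (hN : 1 < N) {t : ℕ} (hc : c t ≤ 1 / 2)
    (hadv : ∀ i, adv t i = 0 ∨ adv t i = 1) (hy : y t = 0 ∨ y t = 1) :
    adaAlgLoss c adv y t ≤
      mixLoss (adaEta N c t) (cumLoss adv y (t + 1)) - mixLoss (adaEta N c t) (cumLoss adv y t)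
        + if 1 - 2 * c t ≤ adaEta N c t then adaEta N c t / 8 else 0 := by
  have : NeZero N := ⟨by omega⟩
  have hp := adaP_mem_Icc (c := c) (y := y) hadv
  rw [cumLoss_succ, mixLoss_add _ _ (expertLoss_eq_zero_or_one t), add_sub_cancel_left,
    ← adaQ_eq_gibbs, sum_adaQ_mul_expertLoss hadv hy]
  refine le_bernoulliMixLoss_add_ite (abs_nonneg _) ?_ hc (adaEta_pos hN t) (adaEta_le_one t)
    (adaAlgLoss_eq_or hp hy)
  rcases hy with hy | hy <;> rw [abs_le] <;> constructor <;> linarith [hp.1, hp.2]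

theorem sum_adaAlgLoss_le (hN : 1 < N) (hc : ∀ t, c t ≤ 1 / 2)
    (hadv : ∀ t i, adv t i = 0 ∨ adv t i = 1) (hy : ∀ t, y t = 0 ∨ y t = 1) (T : ℕ) :
    ∑ t ∈ range T, adaAlgLoss c adv y t ≤ mixLoss (adaEta N c T) (cumLoss adv y T)
      + ∑ t ∈ range T, if 1 - 2 * c t ≤ adaEta N c t then adaEta N c t / 8 else 0 := by
  have : NeZero N := ⟨by omega⟩
  calc _ ≤ ∑ t ∈ range T, ((mixLoss (adaEta N c t) (cumLoss adv y (t + 1))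
          - mixLoss (adaEta N c t) (cumLoss adv y t))
          + if 1 - 2 * c t ≤ adaEta N c t then adaEta N c t / 8 else 0) :=
        sum_le_sum fun t _ => adaAlgLoss_le hN (hc t) (hadv t) (hy t)
    _ ≤ _ := by
      rw [sum_add_distrib]
      gcongr
      exact sum_mixLoss_sub_le (adaEta_pos hN) adaEta_antitone _ cumLoss_zero T

theorem adaEta_le_two_mul_sqrt_sub (hN : 1 < N) (t : ℕ) :
    adaEta N c t ≤ 2 * √(log N) * (√(adaD N c t) - √(adaD N c t - 1)) := by
  rcases eq_or_ne t 0 with rfl | ht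
  · simpa using one_le_two_mul_sqrt_log hN
  · have hd : (1 : ℝ) ≤ adaD N c t := by exact_mod_cast one_le_adaD t
    calc adaEta N c t ≤ √(log N) * (√(adaD N c t))⁻¹ := by
          rw [← div_eq_mul_inv]; exact adaEta_le_sqrt ht
      _ ≤ √(log N) * (2 * (√(adaD N c t) - √(adaD N c t - 1))) :=
          mul_le_mul_of_nonneg_left (inv_sqrt_le_two_mul_sub_sqrt hd) (sqrt_nonneg _)
      _ = _ := by ring

theorem sum_counted_adaEta_le (hN : 1 < N) (T : ℕ) :
    ∑ t ∈ range T, (if 1 - 2 * c t ≤ adaEta N c t then adaEta N c t / 8 else 0)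
      ≤ √(log N) * √(adaD N c T) / 4 := by
  have h := sum_ite_le_sub_of_counter (adaD_succ (N := N) (c := c)) (x := fun t => adaEta N c t / 8)
    (F := fun k => √(log N) * √((k : ℝ) - 1) / 4) (fun t _ => by
      have := adaEta_le_two_mul_sqrt_sub (c := c) hN t
      push_cast
      rw [add_sub_cancel_right]
      linarith) T
  refine h.trans ?_
  simp only [adaD_zero, Nat.cast_one, sub_self, sqrt_zero, mul_zero, zero_div, sub_zero]
  gcongr
  linarith

theorem log_div_adaEta_le (hN : 1 < N) (t : ℕ) :
    log N / adaEta N c t ≤ max (log N) (√(log N) * √(adaD N c t)) := by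
  rcases eq_or_ne t 0 with rfl | ht
  · simp
  have hlog : 0 < log N := log_pos (by exact_mod_cast hN)
  have hd : (0 : ℝ) < adaD N c t := by exact_mod_cast one_le_adaD t
  rw [adaEta_of_ne_zero ht]
  rcases le_total 1 (√(log N / adaD N c t)) with h | h
  · rw [min_eq_right h, div_one]
    exact le_max_left _ _
  · rw [min_eq_left h, sqrt_div hlog.le, div_div_eq_mul_div]
    refine le_max_of_le_right (le_of_eq ?_)
    rw [div_eq_iff (sqrt_pos.2 hlog).ne']
    linear_combination (-√(adaD N c t : ℝ)) * mul_self_sqrt hlog.le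

theorem adaD_le_of_lt_adaEta {η : ℝ} (hη : 0 < η) {t : ℕ} (h : η < adaEta N c t) :
    (adaD N c t : ℝ) ≤ max 1 (log N / η ^ 2) := by
  rcases eq_or_ne t 0 with rfl | ht
  · simp
  have hd : (0 : ℝ) < adaD N c t := by exact_mod_cast one_le_adaD t
  rw [adaEta_of_ne_zero ht] at h
  have := (lt_sqrt hη.le).1 (h.trans_le (min_le_left _ _))
  rw [lt_div_iff₀ hd] at this
  exact le_max_of_le_right ((le_div_iff₀ (by positivity)).2 (by linarith))

theorem adaD_le_log_div_sq_add {η : ℝ} (hη : 0 < η) (T : ℕ) :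
    (adaD N c T : ℝ)
      ≤ log N / η ^ 2 + 2 + ∑ t ∈ range T, if 1 - 2 * c t ≤ η then (1 : ℝ) else 0 := by
  have hB : 0 ≤ log N / η ^ 2 := div_nonneg (log_natCast_nonneg N) (sq_nonneg η)
  induction T with
  | zero => simp; linarith
  | succ T ih =>
    rw [adaD_succ, sum_range_succ]
    push_cast
    split_ifs with hP hQ hQ
    · linarith
    · have := adaD_le_of_lt_adaEta hη ((not_le.1 hQ).trans_le hP)
      have : 0 ≤ ∑ t ∈ range T, if 1 - 2 * c t ≤ η then (1 : ℝ) else 0 :=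
        sum_nonneg fun _ _ => by split_ifs <;> norm_num
      have : max 1 (log N / η ^ 2) ≤ log N / η ^ 2 + 1 := max_le (by linarith) (by linarith)
      linarith
    · linarith
    · linarith

theorem sqrt_log_mul_sqrt_adaD_le (hN : 1 < N) {η : ℝ} (hη0 : 0 < η) (hη1 : η ≤ 1) {T : ℕ}
    (hη : η / 8 * ∑ t ∈ range T, (if 1 - 2 * c t ≤ η then (1 : ℝ) else 0) ≤ log N / η) :
    √(log N) * √(adaD N c T) ≤ √(log N) + 3 * (log N / η) := by
  set a := √(log N)
  have hlog : 0 < log N := log_pos (by exact_mod_cast hN)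
  have ha2 : a ^ 2 = log N := sq_sqrt hlog.le
  have ha : 1 ≤ 2 * a := one_le_two_mul_sqrt_log hN
  have hD := adaD_le_log_div_sq_add (N := N) (c := c) hη0 T
  have hcount : ∑ t ∈ range T, (if 1 - 2 * c t ≤ η then (1 : ℝ) else 0) ≤ 8 * (log N / η ^ 2) := by
    rw [le_div_iff₀ hη0] at hη
    rw [mul_div_assoc', le_div_iff₀ (by positivity)]
    nlinarith
  have hsq : a ^ 2 * adaD N c T ≤ (a + 3 * (log N / η)) ^ 2 := by
    have h6 : a ^ 2 ≤ 6 * a * (log N / η) := by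
      rw [← ha2, mul_div_assoc', le_div_iff₀ hη0]
      nlinarith [sq_nonneg a]
    have : a ^ 2 * adaD N c T ≤ a ^ 2 * (9 * (log N / η ^ 2) + 2) :=
      mul_le_mul_of_nonneg_left (by linarith) (sq_nonneg a)
    have h9 : a ^ 2 * (9 * (log N / η ^ 2)) = (3 * (log N / η)) ^ 2 := by
      rw [ha2]; field_simp; ring
    nlinarith
  rw [← pow_le_pow_iff_left₀ (by positivity) (by positivity) two_ne_zero, mul_pow,
    sq_sqrt (Nat.cast_nonneg _)]
  exact hsq

end AdaptiveForecaster

theorem adaptive_abstention_regret_general (N T : ℕ) (hN : 2 ≤ N) (c : ℕ → ℝ)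
    (hc : ∀ t, c t ∈ Set.Icc (0 : ℝ) (1 / 2))
    (adv : ℕ → Fin N → ℝ) (y : ℕ → ℝ)
    (hadv : ∀ t i, adv t i = 0 ∨ adv t i = 1) (hy : ∀ t, y t = 0 ∨ y t = 1)
    (η : ℝ) (hη0 : 0 < η) (hη1 : η ≤ 1)
    (hηgood : (η / 8) * ∑ t ∈ Finset.range T, (if 1 - 2 * c t ≤ η then (1 : ℝ) else 0)
        ≤ Real.log N / η) :
    (∑ t ∈ Finset.range T, adaAlgLoss c adv y t)
        - ⨅ i : Fin N, ∑ t ∈ Finset.range T, expertLoss adv y t i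
      ≤ (15 / 4) * (Real.log N / η) + (5 / 4) * Real.sqrt (Real.log N) := by
  have : NeZero N := ⟨by omega⟩
  obtain ⟨i, hi⟩ := exists_eq_ciInf_of_finite (f := cumLoss adv y T)
  have hloss := sum_adaAlgLoss_le hN (fun t => (hc t).2) hadv hy T
  have hmix := mixLoss_le (adaEta_pos (c := c) hN T) (cumLoss adv y T) i
  have hcounted := sum_counted_adaEta_le (c := c) hN T
  have hrate := log_div_adaEta_le (c := c) hN T
  have hD := sqrt_log_mul_sqrt_adaD_le hN hη0 hη1 hηgood
  have hlog : log N ≤ √(log N) + 3 * (log N / η) := by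
    have : log N ≤ log N / η := le_div_self (log_natCast_nonneg N) hη0 hη1
    linarith [sqrt_nonneg (log N), log_natCast_nonneg N]
  rw [Fintype.card_fin] at hmix
  change _ - ⨅ i, cumLoss adv y T i ≤ _
  rw [← hi]
  linarith [hrate.trans (max_le hlog hD)]

/-- Theorem 8 (per-learning-rate form): for every `η ∈ (0,1]` satisfying
`(log N)/η ≥ (η/8)·∑_t 1[1 - 2c_t ≤ η]`, the adaptive algorithm's regret is at most
`(15/4)·(log N)/η + (5/4)·√(log N)`. -/
theorem adaptive_abstention_regret (N T : ℕ) (hN : 2 ≤ N) (hT : 1 ≤ T) (c : ℕ → ℝ)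
    (hc : ∀ t, c t ∈ Set.Icc (0 : ℝ) (1 / 2))
    (adv : ℕ → Fin N → ℝ) (y : ℕ → ℝ)
    (hadv : ∀ t i, adv t i = 0 ∨ adv t i = 1) (hy : ∀ t, y t = 0 ∨ y t = 1)
    (η : ℝ) (hη0 : 0 < η) (hη1 : η ≤ 1)
    (hηgood : (η / 8) * ∑ t ∈ Finset.range T, (if 1 - 2 * c t ≤ η then (1 : ℝ) else 0)
        ≤ Real.log N / η) :
    (∑ t ∈ Finset.range T, adaAlgLoss c adv y t)
        - ⨅ i : Fin N, ∑ t ∈ Finset.range T, expertLoss adv y t i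
      ≤ (15 / 4) * (Real.log N / η) + (5 / 4) * Real.sqrt (Real.log N) :=
  adaptive_abstention_regret_general N T hN c hc adv y hadv hy η hη0 hη1 hηgood
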